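/- Let S be a semigroup, ω a congruence on S, and f : S → [0,1] satisfying the bi-ideal non-membership condition f(x*y*z) ≤ max(f(x), f(z)) for all x, y, z ∈ S. Then the lower approximation f̲(w) = ⨅_{w' ∈ [w]ω} f(w') satisfies f̲(x*y*z) ≤ max(f̲(x), f̲(z)) for all x, y, z ∈ S. (Theorems 4.5 and 4.6, Pythagorean non-membership component.) -/

import Mathlib

open unitInterval

instance : Fact ((0:ℝ) ≤ 1) := ⟨zero_le_one⟩

/-- Lower rough approximation: infimum of `f` over the ω-class of `z`. -/
noncomputable def lowerApp {S : Type*} (ω : S → S → Prop) (f : S → unitInterval) (z : S) :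
    unitInterval :=
  ⨅ z' : {z' : S // ω z z'}, f z'.1

/-- Upper rough approximation: supremum of `f` over the ω-class of `z`. -/
noncomputable def upperApp {S : Type*} (ω : S → S → Prop) (f : S → unitInterval) (z : S) :
    unitInterval :=
  ⨆ z' : {z' : S // ω z z'}, f z'.1

theorem rel_mul_mul_of_rel {S : Type*} [Mul S] {ω : S → S → Prop} (hRefl : ∀ y, ω y y)
    (hCong : ∀ x x' y y', ω x x' → ω y y' → ω (x * y) (x' * y'))
    {x x' z z' : S} (y : S) (hx : ω x x') (hz : ω z z') : ω (x * y * z) (x' * y * z') :=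
  hCong _ _ _ _ (hCong _ _ _ _ hx (hRefl y)) hz

theorem lowerApp_le {S : Type*} {ω : S → S → Prop} (f : S → unitInterval) {z z' : S}
    (h : ω z z') : lowerApp ω f z ≤ f z' :=
  iInf_le (fun w : {w : S // ω z w} => f w.1) ⟨z', h⟩

theorem lowerApp_biIdeal_max {S : Type*} [Semigroup S]
    (ω : S → S → Prop) (hEquiv : Equivalence ω)
    (hCong : ∀ x x' y y', ω x x' → ω y y' → ω (x * y) (x' * y'))
    (f : S → unitInterval)
    (hf : ∀ x y z : S, f (x * y * z) ≤ max (f x) (f z)) :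
    ∀ x y z : S, lowerApp ω f (x * y * z) ≤ max (lowerApp ω f x) (lowerApp ω f z) := by
  intro x y z
  change _ ≤ (⨅ x' : {x' // ω x x'}, f x'.1) ⊔ ⨅ z' : {z' // ω z z'}, f z'.1
  rw [iInf_sup_iInf]
  refine le_iInf fun ⟨⟨x', hx⟩, ⟨z', hz⟩⟩ => ?_
  calc lowerApp ω f (x * y * z) ≤ f (x' * y * z') :=
        lowerApp_le f (rel_mul_mul_of_rel hEquiv.refl hCong y hx hz)
    _ ≤ max (f x') (f z') := hf x' y z'
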